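/- Equivalence of width dimensions up to oscillation: let (X,d) be a compact metric space, φ: X → ℝ continuous, and ε > 0. Then Widim'_ε(X,d,φ) ≤ Widim_ε(X,d,φ) ≤ Widim'_ε(X,d,φ) + var_ε(φ,d), where var_ε(φ,d) = sup{|φ(x)−φ(y)| : d(x,y) ≤ ε}. -/

import Mathlib

open scoped Classical

/-- An abstract finite simplicial complex: a downward-closed family of nonempty finite
subsets (faces) of a finite vertex set. -/
structure FinSC where
  V : Type
  [fin : Fintype V]
  faces : Finset (Finset V)
  nonempty_mem : ∀ F ∈ faces, F.Nonempty
  down_closed : ∀ F ∈ faces, ∀ G ⊆ F, G.Nonempty → G ∈ faces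

attribute [instance] FinSC.fin

/-- The support of a point of the geometric realization: its set of nonzero
barycentric coordinates. -/
noncomputable def FinSC.supp (K : FinSC) (w : K.V → ℝ) : Finset K.V :=
  Finset.univ.filter (fun v => w v ≠ 0)

/-- Membership in the geometric realization `|K|`. -/
def FinSC.IsPoint (K : FinSC) (w : K.V → ℝ) : Prop :=
  (∀ v, 0 ≤ w v) ∧ (∑ v, w v = 1) ∧ K.supp w ∈ K.faces

/-- The geometric realization of `K`, topologized as a subspace of `K.V → ℝ`. -/
def FinSC.Sp (K : FinSC) : Type := {w : K.V → ℝ // K.IsPoint w}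

instance (K : FinSC) : TopologicalSpace K.Sp :=
  inferInstanceAs (TopologicalSpace {w : K.V → ℝ // K.IsPoint w})

/-- The local dimension `dim_a K`: the maximum dimension of a simplex of `K`
containing `a`. -/
noncomputable def FinSC.locDim (K : FinSC) (a : K.Sp) : ℕ :=
  ((K.faces.filter (fun F => K.supp a.1 ⊆ F)).sup Finset.card) - 1

/-- The small local dimension `dim'_a K`: the minimum dimension of a simplex of `K`
containing `a`, i.e. the dimension of the support simplex of `a`. -/
noncomputable def FinSC.slocDim (K : FinSC) (a : K.Sp) : ℕ :=
  (K.supp a.1).card - 1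

/-- `Widim_ε(X, d, φ)`: infimum over simplicial complexes `K` and `ε`-embeddings
`f : X → |K|` of `max_x (dim_{f(x)} K + φ(x))`. -/
noncomputable def widim {X : Type*} [MetricSpace X] (φ : X → ℝ) (ε : ℝ) : ℝ :=
  sInf {r : ℝ | ∃ (K : FinSC) (f : X → K.Sp), Continuous f ∧
    (∀ y : K.Sp, Metric.diam (f ⁻¹' {y}) < ε) ∧
    r = ⨆ x : X, ((K.locDim (f x) : ℝ) + φ x)}

/-- `Widim'_ε(X, d, φ)`: the same with the small local dimension. -/
noncomputable def widim' {X : Type*} [MetricSpace X] (φ : X → ℝ) (ε : ℝ) : ℝ :=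
  sInf {r : ℝ | ∃ (K : FinSC) (f : X → K.Sp), Continuous f ∧
    (∀ y : K.Sp, Metric.diam (f ⁻¹' {y}) < ε) ∧
    r = ⨆ x : X, ((K.slocDim (f x) : ℝ) + φ x)}

/-- The oscillation `var_ε(φ,d) = sup {|φ(x)−φ(y)| : d(x,y) ≤ ε}`. -/
noncomputable def varOsc {X : Type*} [MetricSpace X] (φ : X → ℝ) (ε : ℝ) : ℝ :=
  sSup {r : ℝ | ∃ x y : X, dist x y ≤ ε ∧ r = |φ x - φ y|}

/-!
Since `dim'_a P ≤ dim_a P`, the first inequality is immediate. For the second, let `f : X → |K|`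
be an `ε`-embedding and order the vertices of `K` as `v₁, …, vₙ`. For `N ∈ ℕ` the simplex is
covered by cells indexed by `q ∈ {0, …, N}^{n+1}`: a point `a` lies in the cell of `q` when the
offsets `tᵢ - qᵢ` of the scaled partial sums `tᵢ = N (a(v₁) + ⋯ + a(vᵢ))` lie in `(-1, 1)` and in
a common window of length `1`. The cells are open, have mesh `≤ 4 / N`, and `a` lies in at most
`|supp a|` of them: the window, hence `q`, is determined by the fractional part of one `tᵢ`, and
the `tᵢ` take at most `|supp a| + 1` values, two of which (`t₀ = 0` and `tₙ = N`) have the same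
fractional part. By compactness, for large `N` the pulled-back cover of `X` has mesh `< ε`, so a
subordinate partition of unity is an `ε`-embedding `g` into its nerve, and `dim_{g(x)}` of the
nerve is at most `dim'_{f(x')} K` for some `x'` with `d(x, x') ≤ ε`. Passing from `x` to `x'`
costs at most `var_ε(φ)`.
-/

open Finset

namespace FinSC

variable (K : FinSC)

lemma supp_mem_faces (a : K.Sp) : K.supp a.1 ∈ K.faces := a.2.2.2

lemma supp_nonempty (a : K.Sp) : (K.supp a.1).Nonempty := K.nonempty_mem _ (K.supp_mem_faces a)

lemma mem_supp {w : K.V → ℝ} {v : K.V} : v ∈ K.supp w ↔ w v ≠ 0 := by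
  simp [FinSC.supp]

lemma slocDim_le_locDim (a : K.Sp) : K.slocDim a ≤ K.locDim a :=
  Nat.sub_le_sub_right (le_sup (f := card) (mem_filter.2 ⟨K.supp_mem_faces a, subset_rfl⟩)) 1

lemma locDim_le_card (a : K.Sp) : K.locDim a ≤ Fintype.card K.V :=
  (Nat.sub_le _ _).trans (Finset.sup_le fun F _ => F.card_le_univ)

lemma slocDim_le_card (a : K.Sp) : K.slocDim a ≤ Fintype.card K.V :=
  (K.slocDim_le_locDim a).trans (K.locDim_le_card a)

lemma exists_face_locDim_eq (a : K.Sp) :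
    ∃ S ∈ K.faces, K.supp a.1 ⊆ S ∧ K.locDim a = #S - 1 := by
  obtain ⟨S, hS, hsup⟩ := exists_mem_eq_sup (K.faces.filter fun S => K.supp a.1 ⊆ S)
    ⟨_, mem_filter.2 ⟨K.supp_mem_faces a, subset_rfl⟩⟩ card
  exact ⟨S, (mem_filter.1 hS).1, (mem_filter.1 hS).2, by rw [FinSC.locDim, hsup]⟩

lemma diam_preimage_le {X : Type*} [PseudoMetricSpace X] {g : X → K.Sp} {U : K.V → Set X}
    (hg : ∀ x v, (g x).1 v ≠ 0 → x ∈ U v) {c : ℝ} (hc : 0 ≤ c)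
    (hU : ∀ v, ∀ x ∈ U v, ∀ x' ∈ U v, dist x x' ≤ c) (y : K.Sp) :
    Metric.diam (g ⁻¹' {y}) ≤ c := by
  refine Metric.diam_le_of_forall_dist_le hc fun x hx x' hx' => ?_
  obtain ⟨v, hv⟩ := K.supp_nonempty y
  have hyv : y.1 v ≠ 0 := K.mem_supp.1 hv
  rw [Set.mem_preimage, Set.mem_singleton_iff] at hx hx'
  exact hU v x (hg x v (hx ▸ hyv)) x' (hg x' v (hx' ▸ hyv))

end FinSC

noncomputable def nerve {X : Type*} {ι : Type} [Fintype ι] (U : ι → Set X) : FinSC where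
  V := ι
  faces := univ.filter fun S => S.Nonempty ∧ ∃ x, ∀ j ∈ S, x ∈ U j
  nonempty_mem _ hS := (mem_filter.1 hS).2.1
  down_closed S hS G hGS hG := by
    obtain ⟨x, hx⟩ := (mem_filter.1 hS).2.2
    exact mem_filter.2 ⟨mem_univ _, hG, x, fun j hj => hx j (hGS hj)⟩

section Nerve

variable {X : Type*} {ι : Type} [Fintype ι] {U : ι → Set X}

lemma mem_nerve_faces {S : Finset ι} :
    S ∈ (nerve U).faces ↔ S.Nonempty ∧ ∃ x, ∀ j ∈ S, x ∈ U j := by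
  unfold nerve
  exact (@mem_filter _ _ _ _ _).trans (and_iff_right (mem_univ S))

lemma exists_locDim_nerve_le (a : (nerve U).Sp) :
    ∃ x, (∀ j ∈ (nerve U).supp a.1, x ∈ U j) ∧ (nerve U).locDim a ≤ #{j | x ∈ U j} - 1 := by
  obtain ⟨S, hS, hsupp, hloc⟩ := (nerve U).exists_face_locDim_eq a
  obtain ⟨x, hx⟩ := (mem_nerve_faces.1 hS).2
  refine ⟨x, fun j hj => hx j (hsupp hj), hloc ▸ Nat.sub_le_sub_right (card_le_card ?_) 1⟩
  exact fun j hj => mem_filter.2 ⟨mem_univ _, hx j hj⟩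

lemma exists_continuous_nerve [TopologicalSpace X] [NormalSpace X] (hU : ∀ j, IsOpen (U j))
    (hcov : ⋃ j, U j = Set.univ) :
    ∃ g : X → (nerve U).Sp, Continuous g ∧ ∀ x j, (g x).1 j ≠ 0 → x ∈ U j := by
  obtain ⟨ρ, hρ⟩ := PartitionOfUnity.exists_isSubordinate_of_locallyFinite isClosed_univ U hU
    (locallyFinite_of_finite U) hcov.ge
  have hρU : ∀ x j, ρ j x ≠ 0 → x ∈ U j := fun x j h => hρ j (subset_tsupport _ h)
  have hsum : ∀ x, ∑ j, ρ j x = 1 := fun x => by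
    rw [← finsum_eq_sum_of_fintype, ρ.sum_eq_one (Set.mem_univ x)]
  have hpt : ∀ x, (nerve U).IsPoint fun j => ρ j x := by
    intro x
    refine ⟨fun j => ρ.nonneg j x, hsum x, mem_nerve_faces.2 ⟨?_, x, fun j hj => ?_⟩⟩
    · obtain ⟨j, -, hj⟩ := exists_ne_zero_of_sum_ne_zero (hsum x ▸ one_ne_zero)
      exact ⟨j, (nerve U).mem_supp.2 hj⟩
    · exact hρU x j ((nerve U).mem_supp.1 hj)
  exact ⟨fun x => ⟨_, hpt x⟩, (continuous_pi fun j => (ρ j).continuous).subtype_mk _,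
    fun x j => hρU x j⟩

end Nerve

section Staircase

variable {V : Type*} [Fintype V] {n : ℕ} (e : V ≃ Fin n)

def cumSum (a : V → ℝ) (i : ℕ) : ℝ := ∑ v with (e v : ℕ) < i, a v

@[fun_prop]
lemma continuous_cumSum (i : ℕ) : Continuous fun a : V → ℝ => cumSum e a i :=
  continuous_finsetSum _ fun v _ => continuous_apply v

lemma cumSum_zero (a : V → ℝ) : cumSum e a 0 = 0 := by
  simp [cumSum]

lemma cumSum_last (a : V → ℝ) : cumSum e a n = ∑ v, a v := by
  simp [cumSum]

lemma cumSum_succ (a : V → ℝ) (v : V) : cumSum e a (e v + 1) = cumSum e a (e v) + a v := by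
  have : univ.filter (fun w => (e w : ℕ) < e v + 1) =
      insert v (univ.filter fun w => (e w : ℕ) < e v) := by
    ext w
    simp [le_iff_eq_or_lt, Fin.val_inj]
  rw [cumSum, this, sum_insert (by simp), add_comm]
  rfl

lemma cumSum_mono {a : V → ℝ} (ha : ∀ v, 0 ≤ a v) : Monotone (cumSum e a) :=
  fun _ _ hij => sum_le_sum_of_subset_of_nonneg
    (monotone_filter_right _ fun _ _ h => lt_of_lt_of_le h hij) fun v _ _ => ha v

def stairCell (N : ℕ) (q : Fin (n + 1) → Fin (N + 1)) : Set (V → ℝ) :=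
  {w | ∀ i i' : Fin (n + 1), |N * cumSum e w i - q i| < 1 ∧
    N * cumSum e w i - q i < N * cumSum e w i' - q i' + 1}

lemma isOpen_stairCell (N : ℕ) (q : Fin (n + 1) → Fin (N + 1)) : IsOpen (stairCell e N q) := by
  simp only [stairCell, Set.ofPred_forall, Set.ofPred_and]
  exact isOpen_iInter_of_finite fun i => isOpen_iInter_of_finite fun i' =>
    (isOpen_lt (by fun_prop) continuous_const).inter (isOpen_lt (by fun_prop) (by fun_prop))

lemma exists_mem_stairCell (N : ℕ) {a : V → ℝ} (ha : ∀ v, 0 ≤ a v) (hsum : ∑ v, a v = 1) :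
    ∃ q, a ∈ stairCell e N q := by
  set t : ℕ → ℝ := fun i => N * cumSum e a i
  have ht0 : ∀ i, 0 ≤ t i := fun i => by
    simpa [t, cumSum_zero] using mul_le_mul_of_nonneg_left
      (cumSum_mono e ha (Nat.zero_le i)) (Nat.cast_nonneg N)
  have htN : ∀ i : Fin (n + 1), t i ≤ N := fun i => by
    simpa [t, cumSum_last, hsum] using mul_le_mul_of_nonneg_left
      (cumSum_mono e ha (Nat.lt_succ_iff.1 i.2)) (Nat.cast_nonneg N)
  refine ⟨fun i => ⟨⌈t i⌉₊, Nat.lt_succ_of_le (Nat.ceil_le.2 (htN i))⟩, fun i i' => ?_⟩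
  show |t i - ⌈t i⌉₊| < 1 ∧ t i - ⌈t i⌉₊ < t i' - ⌈t i'⌉₊ + 1
  have := Nat.le_ceil (t i)
  exact ⟨abs_sub_lt_iff.2 ⟨by linarith, by linarith [Nat.ceil_lt_add_one (ht0 i)]⟩,
    by linarith [Nat.ceil_lt_add_one (ht0 i')]⟩

lemma dist_le_of_mem_stairCell {N : ℕ} (hN : 0 < N) {q : Fin (n + 1) → Fin (N + 1)}
    {a b : V → ℝ} (ha : a ∈ stairCell e N q) (hb : b ∈ stairCell e N q) : dist a b ≤ 4 / N := by
  rw [dist_pi_le_iff (by positivity)]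
  intro v
  have hNa : (N : ℝ) * a v = N * cumSum e a (e v + 1) - N * cumSum e a (e v) := by
    rw [cumSum_succ]; ring
  have hNb : (N : ℝ) * b v = N * cumSum e b (e v + 1) - N * cumSum e b (e v) := by
    rw [cumSum_succ]; ring
  have h1 := abs_sub_lt_iff.1 (ha (e v).castSucc 0).1
  have h2 := abs_sub_lt_iff.1 (ha (e v).succ 0).1
  have h3 := abs_sub_lt_iff.1 (hb (e v).castSucc 0).1
  have h4 := abs_sub_lt_iff.1 (hb (e v).succ 0).1
  simp only [Fin.val_castSucc, Fin.val_succ] at h1 h2 h3 h4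
  rw [Real.dist_eq, le_div_iff₀ (by positivity), ← abs_of_pos (Nat.cast_pos.2 hN : (0 : ℝ) < N),
    ← abs_mul, abs_le]
  constructor <;> linarith

/-- `q` is recovered as `⌈t - s⌉` from the top `s` of the window of offsets, and `s ∈ [0, 1)`
differs from some `t i` by an integer. -/
lemma card_le_card_image_fract {ι κ : Type*} [Fintype ι] (t : ι → ℝ) {q : κ → ι → ℤ}
    (hq : Function.Injective q) (G : Finset κ)
    (hwin : ∀ k ∈ G, ∀ i i', t i - q k i < t i' - q k i' + 1)
    (hzero : ∀ k ∈ G, ∃ i, t i = q k i) :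
    #G ≤ #(univ.image fun i => Int.fract (t i)) := by
  classical
  calc #G = #(G.image q) := (card_image_of_injective G hq).symm
    _ ≤ #((univ.image fun i => Int.fract (t i)).image fun r i => ⌈t i - r⌉) := by
      refine card_le_card fun p hp => ?_
      obtain ⟨k, hk, rfl⟩ := mem_image.1 hp
      obtain ⟨i₀, hi₀⟩ := hzero k hk
      have : Nonempty ι := ⟨i₀⟩
      obtain ⟨m, hm⟩ := Finite.exists_max fun i => t i - q k i
      have hwin_m := hwin k hk m
      refine mem_image.2 ⟨t m - q k m, mem_image.2 ⟨m, mem_univ _, ?_⟩, funext fun i => ?_⟩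
      · refine Int.fract_eq_iff.2 ⟨by linarith [hm i₀], by linarith [hwin_m i₀], q k m, by ring⟩
      · exact Int.ceil_eq_iff.2 ⟨by linarith [hwin_m i], by linarith [hm i]⟩
    _ ≤ _ := card_image_le

lemma card_image_lt_of_eq {α β : Type*} [DecidableEq β] {s : Finset α} {f : α → β} {x y : α}
    (hx : x ∈ s) (hy : y ∈ s) (hxy : x ≠ y) (hf : f x = f y) : #(s.image f) < #s :=
  card_image_le.lt_of_ne fun h => hxy (card_image_iff.1 h hx hy hf)

lemma card_image_range_le (t : ℕ → ℝ) (n : ℕ) :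
    #((range (n + 1)).image t) ≤ #{i ∈ range n | t (i + 1) ≠ t i} + 1 := by
  induction n with
  | zero => simp
  | succ n ih =>
    rw [range_add_one (n := n + 1), image_insert]
    conv_rhs => rw [range_add_one, filter_insert]
    by_cases h : t (n + 1) = t n
    · rw [insert_eq_of_mem (h ▸ mem_image_of_mem t (self_mem_range_succ n)), if_neg (not_not.2 h)]
      exact ih
    · rw [if_pos h, card_insert_of_notMem (s := {i ∈ range n | t (i + 1) ≠ t i}) (by simp)]
      exact (card_insert_le _ _).trans (Nat.succ_le_succ ih)

lemma card_filter_mem_stairCell_le {N : ℕ} (hN : 0 < N) {a : V → ℝ} (hsum : ∑ v, a v = 1) :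
    #{q | a ∈ stairCell e N q} ≤ #{v | a v ≠ 0} := by
  set t : ℕ → ℝ := fun i => N * cumSum e a i
  have ht0 : t 0 = 0 := by simp [t, cumSum_zero]
  have htn : t n = N := by simp [t, cumSum_last, hsum]
  have hfract : #{q | a ∈ stairCell e N q} ≤
      #(univ.image fun i : Fin (n + 1) => Int.fract (t i)) := by
    refine card_le_card_image_fract (fun i : Fin (n + 1) => t i) (q := fun q i => (q i : ℕ))
      (fun q q' h => funext fun i => Fin.ext (Nat.cast_injective (congrFun h i))) _
      (fun q hq i i' => by simpa using ((mem_filter.1 hq).2 i i').2) fun q hq => ⟨0, ?_⟩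
    have h0 : ((q 0 : ℕ) : ℝ) < 1 := by simpa [cumSum_zero] using ((mem_filter.1 hq).2 0 0).1
    have hq0 : (q 0 : ℕ) = 0 := Nat.lt_one_iff.1 (by exact_mod_cast h0)
    simp [hq0, ht0]
  have hvals : univ.image (fun i : Fin (n + 1) => t i) = (range (n + 1)).image t := by
    ext r
    simp [Fin.exists_iff]
  have hlt : #(univ.image fun i : Fin (n + 1) => Int.fract (t i)) < #((range (n + 1)).image t) := by
    rw [← hvals, show univ.image (fun i : Fin (n + 1) => Int.fract (t i)) =
      (univ.image fun i : Fin (n + 1) => t i).image Int.fract by rw [image_image]; rfl]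
    refine card_image_lt_of_eq (x := t 0) (y := t n) (mem_image_of_mem _ (mem_univ 0))
      (mem_image_of_mem _ (mem_univ (Fin.last n))) ?_ ?_
    · simpa [ht0, htn] using (Nat.cast_pos.2 hN : (0 : ℝ) < N).ne
    · simp [ht0, htn]
  have hjumps : #{i ∈ range n | t (i + 1) ≠ t i} ≤ #{v | a v ≠ 0} := by
    refine (card_le_card fun i hi => ?_).trans (card_image_le (f := fun v => (e v : ℕ)))
    obtain ⟨hi, hjump⟩ := mem_filter.1 hi
    set v := e.symm ⟨i, mem_range.1 hi⟩
    have hv : (e v : ℕ) = i := by simp [v]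
    refine mem_image.2 ⟨v, mem_filter.2 ⟨mem_univ _, fun hav => hjump ?_⟩, hv⟩
    simp only [t, ← hv, cumSum_succ, hav, add_zero]
  have := card_image_range_le t n
  omega

end Staircase

section Compact

variable {X Y : Type*} [PseudoMetricSpace X] [CompactSpace X] [MetricSpace Y] {F : X → Y}

lemma exists_pos_dist_lt_of_eq (hF : Continuous F) {c : ℝ}
    (h : ∀ x x', F x = F x' → dist x x' < c) :
    ∃ δ > 0, ∀ x x', dist (F x) (F x') < δ → dist x x' < c := by
  set D : Set (X × X) := {p | c ≤ dist p.1 p.2}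
  have hD : IsCompact D := (isClosed_le continuous_const continuous_dist).isCompact
  rcases D.eq_empty_or_nonempty with hDe | hDne
  · exact ⟨1, one_pos, fun x x' _ => not_le.1 fun hc => hDe.subset (show (x, x') ∈ D from hc)⟩
  obtain ⟨p, hp, hmin⟩ := hD.exists_isMinOn hDne
    ((hF.comp continuous_fst).dist (hF.comp continuous_snd)).continuousOn
  refine ⟨dist (F p.1) (F p.2), dist_pos.2 fun hFp => (h _ _ hFp).not_ge hp, fun x x' hxx' => ?_⟩
  exact not_le.1 fun hc => hxx'.not_ge (hmin (show (x, x') ∈ D from hc))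

lemma exists_dist_lt_of_dist_lt [Nonempty X] (hF : Continuous F) {ε : ℝ}
    (h : ∀ x x', F x = F x' → dist x x' < ε) :
    ∃ δ > 0, ∃ c < ε, ∀ x x', dist (F x) (F x') < δ → dist x x' < c := by
  set S : Set (X × X) := {p | F p.1 = F p.2}
  have hS : IsCompact S := (isClosed_eq (hF.comp continuous_fst) (hF.comp continuous_snd)).isCompact
  obtain ⟨p, hp, hmax⟩ := hS.exists_isMaxOn ⟨(Classical.arbitrary X, Classical.arbitrary X), rfl⟩
    continuous_dist.continuousOn
  have hpε := h _ _ hp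
  obtain ⟨δ, hδ, hδc⟩ := exists_pos_dist_lt_of_eq hF (c := (dist p.1 p.2 + ε) / 2)
    fun x x' hxx' => by linarith [isMaxOn_iff.1 hmax (x, x') hxx']
  exact ⟨δ, hδ, _, by linarith, hδc⟩

lemma dist_lt_of_diam_preimage_lt {Z : Type*} {f : X → Z} {ε : ℝ}
    (hf : ∀ z, Metric.diam (f ⁻¹' {z}) < ε) {x x' : X} (h : f x = f x') : dist x x' < ε :=
  (Metric.dist_le_diam_of_mem Metric.isBounded_of_compactSpace
    (show x ∈ f ⁻¹' {f x'} from h) rfl).trans_lt (hf _)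

end Compact

theorem FinSC.exists_locDim_le_slocDim {X : Type*} [MetricSpace X] [CompactSpace X] [Nonempty X]
    {ε : ℝ} (K : FinSC) {f : X → K.Sp} (hf : Continuous f)
    (hfib : ∀ y, Metric.diam (f ⁻¹' {y}) < ε) :
    ∃ (K' : FinSC) (g : X → K'.Sp), Continuous g ∧ (∀ y, Metric.diam (g ⁻¹' {y}) < ε) ∧
      ∀ x, ∃ x', dist x x' ≤ ε ∧ K'.locDim (g x) ≤ K.slocDim (f x') := by
  set F : X → (K.V → ℝ) := fun x => (f x).1
  have hF : Continuous F := continuous_subtype_val.comp hf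
  obtain ⟨δ, hδ, c, hcε, hδc⟩ := exists_dist_lt_of_dist_lt hF
    fun x x' h => dist_lt_of_diam_preimage_lt hfib (Subtype.ext h)
  have hc : 0 ≤ c := by
    obtain x₀ : X := Classical.arbitrary X
    exact dist_nonneg.trans (hδc x₀ x₀ (by simpa using hδ)).le
  set e := Fintype.equivFin K.V
  set N := ⌈4 / δ⌉₊ + 1
  have hN : 0 < N := Nat.succ_pos _
  have hNδ : 4 / (N : ℝ) < δ := by
    rw [div_lt_iff₀ (by positivity), ← div_lt_iff₀' hδ]
    exact (Nat.le_ceil (4 / δ)).trans_lt (by simp [N])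
  set U := fun q => F ⁻¹' stairCell e N q
  have hU : ∀ q, ∀ x ∈ U q, ∀ x' ∈ U q, dist x x' < c := fun q x hx x' hx' =>
    hδc x x' ((dist_le_of_mem_stairCell e hN hx hx').trans_lt hNδ)
  obtain ⟨g, hg, hgU⟩ := exists_continuous_nerve (fun q => (isOpen_stairCell e N q).preimage hF)
    (Set.iUnion_eq_univ_iff.2 fun x => exists_mem_stairCell e N (f x).2.1 (f x).2.2.1)
  refine ⟨nerve U, g, hg, fun y => ((nerve U).diam_preimage_le hgU hc
    (fun q x hx x' hx' => (hU q x hx x' hx').le) y).trans_lt hcε, fun x => ?_⟩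
  obtain ⟨x', hx', hloc⟩ := exists_locDim_nerve_le (g x)
  obtain ⟨q, hq⟩ := (nerve U).supp_nonempty (g x)
  refine ⟨x', (hU q x (hgU x q ((nerve U).mem_supp.1 hq)) x' (hx' q hq)).le.trans hcε.le,
    hloc.trans (Nat.sub_le_sub_right ?_ 1)⟩
  exact card_filter_mem_stairCell_le e hN (f x').2.2.1

lemma sInf_le_sInf_add_of_forall_exists_le {A B : Set ℝ} {c : ℝ} (hc : 0 ≤ c) (hA : BddBelow A)
    (hne : A.Nonempty → B.Nonempty) (h : ∀ b ∈ B, ∃ a ∈ A, a ≤ b + c) : sInf A ≤ sInf B + c := by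
  rcases B.eq_empty_or_nonempty with rfl | hB
  · rw [Set.not_nonempty_iff_eq_empty.1 fun hA' => (hne hA').ne_empty rfl]
    simpa using hc
  rw [← sub_le_iff_le_add]
  refine le_csInf hB fun b hb => ?_
  obtain ⟨a, ha, hab⟩ := h b hb
  linarith [csInf_le hA ha]

lemma le_ciSup_natCast_add {X : Type*} [TopologicalSpace X] [CompactSpace X] {φ : X → ℝ}
    (hφ : Continuous φ) {d : X → ℕ} {M : ℕ} (hd : ∀ x, d x ≤ M) (x : X) :
    (d x : ℝ) + φ x ≤ ⨆ y, ((d y : ℝ) + φ y) := by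
  obtain ⟨C, hC⟩ := (isCompact_range hφ).bddAbove
  refine le_ciSup (f := fun y => (d y : ℝ) + φ y) ⟨M + C, ?_⟩ x
  rintro _ ⟨y, rfl⟩
  exact add_le_add (by exact_mod_cast hd y) (hC ⟨y, rfl⟩)

section Potential

variable {X : Type*} [MetricSpace X] [CompactSpace X] {φ : X → ℝ} {ε : ℝ}

lemma abs_sub_le_varOsc (hφ : Continuous φ) {x y : X} (h : dist x y ≤ ε) :
    |φ x - φ y| ≤ varOsc φ ε := by
  obtain ⟨C, hC⟩ := isCompact_univ.exists_bound_of_continuousOn hφ.continuousOn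
  refine le_csSup ⟨C + C, ?_⟩ ⟨x, y, h, rfl⟩
  rintro _ ⟨x, y, -, rfl⟩
  exact (abs_sub _ _).trans (add_le_add (hC x trivial) (hC y trivial))

lemma varOsc_nonneg [Nonempty X] (hφ : Continuous φ) (hε : 0 ≤ ε) : 0 ≤ varOsc φ ε := by
  obtain x : X := Classical.arbitrary X
  simpa using abs_sub_le_varOsc hφ (x := x) (y := x) (by simpa using hε)

variable [Nonempty X]

lemma widim'_le_widim (hφ : Continuous φ) : widim' φ ε ≤ widim φ ε := by
  obtain x₀ : X := Classical.arbitrary X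
  unfold widim' widim
  refine (sInf_le_sInf_add_of_forall_exists_le le_rfl ⟨φ x₀, ?_⟩ ?_ ?_).trans_eq (add_zero _)
  · rintro _ ⟨K, f, -, -, rfl⟩
    exact (le_add_of_nonneg_left (Nat.cast_nonneg _)).trans
      (le_ciSup_natCast_add hφ (fun x => K.slocDim_le_card (f x)) x₀)
  · rintro ⟨_, K, f, hf, hfib, -⟩
    exact ⟨_, K, f, hf, hfib, rfl⟩
  rintro _ ⟨K, f, hf, hfib, rfl⟩
  refine ⟨_, ⟨K, f, hf, hfib, rfl⟩, ?_⟩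
  rw [add_zero]
  exact ciSup_le fun x => (add_le_add_left (by exact_mod_cast K.slocDim_le_locDim (f x)) _).trans
    (le_ciSup_natCast_add hφ (fun x => K.locDim_le_card (f x)) x)

lemma widim_le_widim'_add_varOsc (hφ : Continuous φ) (hε : 0 < ε) :
    widim φ ε ≤ widim' φ ε + varOsc φ ε := by
  obtain x₀ : X := Classical.arbitrary X
  unfold widim' widim
  refine sInf_le_sInf_add_of_forall_exists_le (varOsc_nonneg hφ hε.le)
    ⟨φ x₀, ?_⟩ ?_ ?_
  · rintro _ ⟨K, f, -, -, rfl⟩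
    exact (le_add_of_nonneg_left (Nat.cast_nonneg _)).trans
      (le_ciSup_natCast_add hφ (fun x => K.locDim_le_card (f x)) x₀)
  · rintro ⟨_, K, f, hf, hfib, -⟩
    exact ⟨_, K, f, hf, hfib, rfl⟩
  rintro _ ⟨K, f, hf, hfib, rfl⟩
  obtain ⟨K', g, hg, hgfib, hdim⟩ := K.exists_locDim_le_slocDim hf hfib
  refine ⟨_, ⟨K', g, hg, hgfib, rfl⟩, ciSup_le fun x => ?_⟩
  obtain ⟨x', hxx', hx'⟩ := hdim x
  have hsloc := le_ciSup_natCast_add hφ (fun x => K.slocDim_le_card (f x)) x'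
  have hvar := (le_abs_self _).trans (abs_sub_le_varOsc hφ hxx')
  have : (K'.locDim (g x) : ℝ) ≤ K.slocDim (f x') := by exact_mod_cast hx'
  linarith

end Potential

/-- `Widim'_ε(X,d,φ) ≤ Widim_ε(X,d,φ) ≤ Widim'_ε(X,d,φ) + var_ε(φ,d)`. -/
theorem stmt_14 {X : Type*} [MetricSpace X] [CompactSpace X] [Nonempty X]
    (φ : X → ℝ) (hφ : Continuous φ) (ε : ℝ) (hε : 0 < ε) :
    widim' φ ε ≤ widim φ ε ∧ widim φ ε ≤ widim' φ ε + varOsc φ ε :=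
  ⟨widim'_le_widim hφ, widim_le_widim'_add_varOsc hφ hε⟩
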